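/- The clobber position oxoo is equivalent to the sum of the clobber positions xxo and xo, and its canonical form is {0, xo | 0}. -/

import Mathlib

/-! Combinatorial game theory (`SetTheory.PGame`) is no longer part of Mathlib; the
definitions used below are restated here with their old (Mathlib, December 2024) meaning. -/

universe u

namespace SetTheory

inductive PGame : Type (u + 1)
  | mk : ∀ α β : Type u, (α → PGame) → (β → PGame) → PGame

namespace PGame

/-- Given the IH for the options of `x`, computes `(x ≤ y, y ≤ x)` by recursion on `y`. -/
def leInner {xl xr : Type u} (ihL : xl → (PGame.{u} → Prop) × (PGame.{u} → Prop))
    (ihR : xr → (PGame.{u} → Prop) × (PGame.{u} → Prop)) : PGame.{u} → Prop × Prop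
  | mk yl yr yL yR =>
    ((∀ i, ¬ (ihL i).2 (mk yl yr yL yR)) ∧ ∀ j, ¬ (leInner ihL ihR (yR j)).2,
     (∀ i, ¬ (leInner ihL ihR (yL i)).1) ∧ ∀ j, ¬ (ihR j).1 (mk yl yr yL yR))

/-- `leAux x = (fun y => x ≤ y, fun y => y ≤ x)`. -/
def leAux : PGame.{u} → (PGame.{u} → Prop) × (PGame.{u} → Prop)
  | mk _ _ xL xR =>
    (fun y => (leInner (fun i => leAux (xL i)) (fun j => leAux (xR j)) y).1,
     fun y => (leInner (fun i => leAux (xL i)) (fun j => leAux (xR j)) y).2)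

/-- `x ≤ y` iff no left option of `x` is `≥ y` and no right option of `y` is `≤ x`. -/
instance : LE PGame.{u} := ⟨fun x y => (leAux x).1 y⟩

def Equiv (x y : PGame.{u}) : Prop := x ≤ y ∧ y ≤ x

instance : HasEquiv PGame.{u} := ⟨Equiv⟩

instance : Zero PGame.{u} := ⟨⟨PEmpty, PEmpty, PEmpty.elim, PEmpty.elim⟩⟩

def star : PGame.{u} := ⟨PUnit, PUnit, fun _ => 0, fun _ => 0⟩

/-- Given `x = mk xl xr xL xR` and the maps `y ↦ xL i + y`, `y ↦ xR j + y`, computes `x + y`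
by recursion on `y`. -/
def addInner {xl xr : Type u} (xL : xl → PGame.{u}) (xR : xr → PGame.{u})
    (ihL : xl → PGame.{u} → PGame.{u}) (ihR : xr → PGame.{u} → PGame.{u}) :
    PGame.{u} → PGame.{u}
  | mk yl yr yL yR =>
    mk (xl ⊕ yl) (xr ⊕ yr)
      (Sum.elim (fun i => ihL i (mk yl yr yL yR)) (fun i => addInner xL xR ihL ihR (yL i)))
      (Sum.elim (fun j => ihR j (mk yl yr yL yR)) (fun j => addInner xL xR ihL ihR (yR j)))

/-- The sum `x + y`: left options `xL i + y` and `x + yL i`, right options `xR j + y`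
and `x + yR j` (same as the old Mathlib definition). -/
def add : PGame.{u} → PGame.{u} → PGame.{u}
  | mk _ _ xL xR => addInner xL xR (fun i => add (xL i)) (fun j => add (xR j))

instance : Add PGame.{u} := ⟨add⟩

def ofLists (L R : List PGame.{u}) : PGame.{u} :=
  mk (ULift (Fin L.length)) (ULift (Fin R.length)) (fun i => L[i.down.1]) fun j => R[j.down.1]

end PGame

end SetTheory

open SetTheory PGame

inductive Cell | x | o | e
deriving DecidableEq

abbrev Pos := List Cell

/-- All positions reachable by one move of the player with stones `me`
clobbering an adjacent stone of the opponent `opp`. -/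
def movesAux (me opp : Cell) : Pos → List Pos
  | a :: b :: rest =>
      (if a = me ∧ b = opp then [Cell.e :: me :: rest] else []) ++
      (if a = opp ∧ b = me then [me :: Cell.e :: rest] else []) ++
      (movesAux me opp (b :: rest)).map (a :: ·)
  | _ => []

def leftMoves (p : Pos) : List Pos := movesAux Cell.x Cell.o p
def rightMoves (p : Pos) : List Pos := movesAux Cell.o Cell.x p

def stones (p : Pos) : Nat := p.countP (· != Cell.e)

/-- Game value of a clobber position, via fuel recursion (each move removes one stone). -/
def valueFuel : Nat → Pos → PGame
  | 0, _ => 0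
  | n+1, p => PGame.ofLists ((leftMoves p).map (valueFuel n)) ((rightMoves p).map (valueFuel n))

def value (p : Pos) : PGame := valueFuel (stones p) p

/-!
In `oxoo`, Left's two moves leave `x·oo` and `o·xo`, worth `0` and `xo = {0 | 0} = *`, and
both of Right's moves leave only `o`s, worth `0`. So `oxoo` is the game tree `{0, * | 0, 0}`,
whose options match those of `{0, * | 0}` up to equivalence. Likewise `xxo = {0 | xo} = ↑`, and
`↑ + * ≈ {0, * | 0}` is a finite check of the recursive definition of `≤`.
-/

namespace SetTheory.PGame

theorem leAux_symm : ∀ x y : PGame.{u},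
    ((leAux x).1 y ↔ (leAux y).2 x) ∧ ((leAux x).2 y ↔ (leAux y).1 x)
  | mk xl xr xL xR, y => by
    induction y with
    | mk yl yr yL yR ihL ihR =>
      exact ⟨and_congr (forall_congr' fun i => not_congr (leAux_symm (xL i) _).2)
          (forall_congr' fun j => not_congr (ihR j).2),
        and_congr (forall_congr' fun i => not_congr (ihL i).1)
          (forall_congr' fun j => not_congr (leAux_symm (xR j) _).1)⟩

theorem mk_le_mk {xl xr yl yr : Type u} {xL : xl → PGame.{u}} {xR : xr → PGame.{u}}
    {yL : yl → PGame.{u}} {yR : yr → PGame.{u}} :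
    mk xl xr xL xR ≤ mk yl yr yL yR ↔
      (∀ i, ¬ mk yl yr yL yR ≤ xL i) ∧ ∀ j, ¬ yR j ≤ mk xl xr xL xR := by
  show ((∀ i, ¬ (leAux (xL i)).2 _) ∧ ∀ j, ¬ (leAux (mk xl xr xL xR)).2 (yR j)) ↔ _
  exact and_congr (forall_congr' fun _ => not_congr (leAux_symm _ _).2)
    (forall_congr' fun _ => not_congr (leAux_symm _ _).2)

theorem not_le_leftOption_of_mk_le {xl xr : Type u} {xL : xl → PGame.{u}} {xR : xr → PGame.{u}}
    {y : PGame.{u}} (h : mk xl xr xL xR ≤ y) (i : xl) : ¬ y ≤ xL i := by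
  cases y
  exact (mk_le_mk.1 h).1 i

theorem not_rightOption_le_of_le_mk {x : PGame.{u}} {yl yr : Type u} {yL : yl → PGame.{u}}
    {yR : yr → PGame.{u}} (h : x ≤ mk yl yr yL yR) (j : yr) : ¬ yR j ≤ x := by
  cases x
  exact (mk_le_mk.1 h).2 j

protected theorem le_refl : ∀ x : PGame.{u}, x ≤ x
  | mk _ _ xL xR => mk_le_mk.2
    ⟨fun i h => not_le_leftOption_of_mk_le h i (PGame.le_refl (xL i)),
      fun j h => not_rightOption_le_of_le_mk h j (PGame.le_refl (xR j))⟩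

/-- Transitivity, proved jointly for the three cyclic rotations so that each of `x`, `y`, `z`
can be replaced by one of its options in the induction. -/
theorem le_trans_rotations (x y z : PGame.{u}) :
    (x ≤ y → y ≤ z → x ≤ z) ∧ (y ≤ z → z ≤ x → y ≤ x) ∧ (z ≤ x → x ≤ y → z ≤ y) := by
  induction x generalizing y z with | mk xl xr xL xR ihxL ihxR =>
  induction y generalizing z with | mk yl yr yL yR ihyL ihyR =>
  induction z with | mk zl zr zL zR ihzL ihzR =>
  refine ⟨fun hxy hyz => mk_le_mk.2 ⟨fun i h => ?_, fun j h => ?_⟩,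
    fun hyz hzx => mk_le_mk.2 ⟨fun i h => ?_, fun j h => ?_⟩,
    fun hzx hxy => mk_le_mk.2 ⟨fun i h => ?_, fun j h => ?_⟩⟩
  · exact not_le_leftOption_of_mk_le hxy i ((ihxL i _ _).2.1 hyz h)
  · exact not_rightOption_le_of_le_mk hyz j ((ihzR j).2.2 h hxy)
  · exact not_le_leftOption_of_mk_le hyz i ((ihyL i _).2.2 hzx h)
  · exact not_rightOption_le_of_le_mk hzx j ((ihxR j _ _).1 h hyz)
  · exact not_le_leftOption_of_mk_le hzx i ((ihzL i).1 hxy h)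
  · exact not_rightOption_le_of_le_mk hxy j ((ihyR j _).2.1 h hzx)

protected theorem le_trans {x y z : PGame.{u}} (hxy : x ≤ y) (hyz : y ≤ z) : x ≤ z :=
  (le_trans_rotations x y z).1 hxy hyz

theorem equiv_iff {x y : PGame.{u}} : x ≈ y ↔ x ≤ y ∧ y ≤ x := Iff.rfl

theorem equiv_symm {x y : PGame.{u}} (h : x ≈ y) : y ≈ x := ⟨h.2, h.1⟩

theorem equiv_trans {x y z : PGame.{u}} (hxy : x ≈ y) (hyz : y ≈ z) : x ≈ z :=
  ⟨PGame.le_trans hxy.1 hyz.1, PGame.le_trans hyz.2 hxy.2⟩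

theorem mk_le_mk_of_exists {xl xr yl yr : Type u} {xL : xl → PGame.{u}} {xR : xr → PGame.{u}}
    {yL : yl → PGame.{u}} {yR : yr → PGame.{u}}
    (hl : ∀ i, ∃ j, xL i ≤ yL j) (hr : ∀ j, ∃ i, xR i ≤ yR j) :
    mk xl xr xL xR ≤ mk yl yr yL yR :=
  mk_le_mk.2
    ⟨fun i h => (hl i).elim fun j hj =>
      not_le_leftOption_of_mk_le (PGame.le_refl _) j (PGame.le_trans h hj),
    fun j h => (hr j).elim fun i hi =>
      not_rightOption_le_of_le_mk (PGame.le_refl _) i (PGame.le_trans hi h)⟩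

theorem mk_equiv_mk_of_exists {xl xr yl yr : Type u} {xL : xl → PGame.{u}}
    {xR : xr → PGame.{u}} {yL : yl → PGame.{u}} {yR : yr → PGame.{u}}
    (hl₁ : ∀ i, ∃ j, xL i ≈ yL j) (hl₂ : ∀ j, ∃ i, xL i ≈ yL j)
    (hr₁ : ∀ i, ∃ j, xR i ≈ yR j) (hr₂ : ∀ j, ∃ i, xR i ≈ yR j) :
    mk xl xr xL xR ≈ mk yl yr yL yR :=
  ⟨mk_le_mk_of_exists (fun i => (hl₁ i).imp fun _ h => h.1) fun j => (hr₂ j).imp fun _ h => h.1,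
    mk_le_mk_of_exists (fun j => (hl₂ j).imp fun _ h => h.2) fun i => (hr₁ i).imp fun _ h => h.2⟩

theorem zero_eq_mk : (0 : PGame.{u}) = mk PEmpty PEmpty PEmpty.elim PEmpty.elim := rfl

theorem star_eq_mk : star.{u} = mk PUnit PUnit (fun _ => 0) fun _ => 0 := rfl

theorem mk_add_mk {xl xr yl yr : Type u} (xL : xl → PGame.{u}) (xR : xr → PGame.{u})
    (yL : yl → PGame.{u}) (yR : yr → PGame.{u}) :
    mk xl xr xL xR + mk yl yr yL yR =
      mk (xl ⊕ yl) (xr ⊕ yr)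
        (Sum.elim (fun i => xL i + mk yl yr yL yR) fun i => mk xl xr xL xR + yL i)
        (Sum.elim (fun j => xR j + mk yl yr yL yR) fun j => mk xl xr xL xR + yR j) := rfl

theorem ofLists_equiv_ofLists_of_exists {L R L' R' : List PGame.{u}}
    (hl₁ : ∀ a ∈ L, ∃ b ∈ L', a ≈ b) (hl₂ : ∀ b ∈ L', ∃ a ∈ L, a ≈ b)
    (hr₁ : ∀ a ∈ R, ∃ b ∈ R', a ≈ b) (hr₂ : ∀ b ∈ R', ∃ a ∈ R, a ≈ b) :
    ofLists L R ≈ ofLists L' R' := by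
  have forth {M M' : List PGame.{u}} (h : ∀ a ∈ M, ∃ b ∈ M', a ≈ b) (i : ULift (Fin M.length)) :
      ∃ j : ULift (Fin M'.length), M[i.down.1] ≈ M'[j.down.1] := by
    obtain ⟨b, hb, hab⟩ := h _ (List.getElem_mem _)
    obtain ⟨j, hj, rfl⟩ := List.getElem_of_mem hb
    exact ⟨⟨j, hj⟩, hab⟩
  have back {M M' : List PGame.{u}} (h : ∀ b ∈ M', ∃ a ∈ M, a ≈ b) (j : ULift (Fin M'.length)) :
      ∃ i : ULift (Fin M.length), M[i.down.1] ≈ M'[j.down.1] :=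
    (forth (fun b hb => (h b hb).imp fun _ ⟨ha, hab⟩ => ⟨ha, equiv_symm hab⟩) j).imp
      fun _ => equiv_symm
  exact mk_equiv_mk_of_exists (forth hl₁) (back hl₂) (forth hr₁) (back hr₂)

theorem ofLists_nil_equiv_zero : ofLists.{u} [] [] ≈ 0 :=
  mk_equiv_mk_of_exists (fun i => i.down.elim0) (fun i => i.elim) (fun i => i.down.elim0)
    fun i => i.elim

end SetTheory.PGame

open SetTheory.PGame

theorem value_xo : value [Cell.x, Cell.o] = ofLists [ofLists [] []] [ofLists [] []] := rfl

theorem value_xxo :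
    value [Cell.x, Cell.x, Cell.o] = ofLists [ofLists [] []] [value [Cell.x, Cell.o]] := rfl

theorem value_oxoo : value [Cell.o, Cell.x, Cell.o, Cell.o] =
    ofLists [ofLists [] [], value [Cell.x, Cell.o]] [ofLists [] [], ofLists [] []] := rfl

theorem value_xo_equiv_star : value [Cell.x, Cell.o] ≈ star := by
  have h0 (i : ULift (Fin 1)) : [ofLists [] []][i.down.1] ≈ 0 := by
    simpa using ofLists_nil_equiv_zero
  rw [value_xo]
  exact mk_equiv_mk_of_exists (fun i => ⟨⟨⟩, h0 i⟩) (fun _ => ⟨⟨0⟩, h0 ⟨0⟩⟩) (fun i => ⟨⟨⟩, h0 i⟩)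
    fun _ => ⟨⟨0⟩, h0 ⟨0⟩⟩

theorem value_oxoo_equiv : value [Cell.o, Cell.x, Cell.o, Cell.o] ≈ ofLists [0, star] [0] := by
  rw [value_oxoo]
  apply ofLists_equiv_ofLists_of_exists <;>
    simp [ofLists_nil_equiv_zero, value_xo_equiv_star]

theorem value_xxo_add_value_xo_equiv :
    value [Cell.x, Cell.x, Cell.o] + value [Cell.x, Cell.o] ≈ ofLists [0, star] [0] := by
  simp [value_xxo, value_xo, ofLists, star_eq_mk, zero_eq_mk, mk_add_mk, equiv_iff, mk_le_mk,
    ULift.forall, Fin.forall_fin_succ, Sum.forall]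

/-- The clobber position `oxoo` is equivalent to `xxo + xo`, and its canonical form is
`{0, xo | 0}` (with `xo = *`). -/
theorem oxoo_equiv :
    value [Cell.o, Cell.x, Cell.o, Cell.o] ≈
      value [Cell.x, Cell.x, Cell.o] + value [Cell.x, Cell.o] ∧
    value [Cell.o, Cell.x, Cell.o, Cell.o] ≈ PGame.ofLists [0, star] [0] :=
  ⟨equiv_trans value_oxoo_equiv (equiv_symm value_xxo_add_value_xo_equiv), value_oxoo_equiv⟩
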